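/- Let k ∈ {1,2} and p > 2k−1. The bilinear form a_p(u,v) = ∫₀^∞ (−2k u(2x) + u(x)) v(x) x^p dx on L²(x^p dx) is bounded and coercive: there exists α > 0 (explicitly α = 1 − 2k·2^{−(p+1)/2}) such that a_p(u,u) ≥ α ‖u‖²_{L²(x^p dx)} for all u, where the cross term is bounded via Cauchy–Schwarz by ∫ |2k u(2x) u(x)| x^p dx ≤ 2k·2^{−(p+1)/2} ‖u‖²_{L²(x^p dx)}. -/

import Mathlib

/-!
The substitution `y = a x` shows that `u ↦ u (a ·)` scales the norm of `L²(x^p dx)` on `(0, ∞)` by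
exactly `a ^ (-(p + 1) / 2)`. Cauchy–Schwarz in this weighted space therefore bounds the dilation
term of `∫ (c u(a x) + u x) v(x) x^p dx` by `|c| a ^ (-(p + 1) / 2) ‖u‖ ‖v‖`, which yields
boundedness with constant `1 + |c| a ^ (-(p + 1) / 2)` and coercivity with constant
`1 - |c| a ^ (-(p + 1) / 2)`; the theorem is the case `a = 2`, `c = -2k`.
-/

open MeasureTheory Set Filter

section WeightedCauchySchwarz

variable {α : Type*} [MeasurableSpace α] {μ : Measure α}

theorem integral_abs_mul_le_sqrt_mul_sqrt {F G : α → ℝ} (hF : MemLp F 2 μ) (hG : MemLp G 2 μ) :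
    ∫ x, |F x * G x| ∂μ ≤ √(∫ x, F x ^ 2 ∂μ) * √(∫ x, G x ^ 2 ∂μ) := by
  have hpq : Real.HolderConjugate 2 2 := ⟨by norm_num, by norm_num, by norm_num⟩
  have h := integral_mul_le_Lp_mul_Lq_of_nonneg hpq
    (Eventually.of_forall fun x => norm_nonneg (F x))
    (Eventually.of_forall fun x => norm_nonneg (G x))
    (by simpa using hF.norm) (by simpa using hG.norm)
  simp only [Real.norm_eq_abs, Real.rpow_two, sq_abs] at h
  simpa only [abs_mul, Real.sqrt_eq_rpow] using h

variable {w f g : α → ℝ}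

theorem memLp_two_mul_sqrt (hw : AEStronglyMeasurable w μ) (hw0 : 0 ≤ᵐ[μ] w)
    (hf : AEStronglyMeasurable f μ) (hf2 : Integrable (fun x => f x ^ 2 * w x) μ) :
    MemLp (fun x => f x * √(w x)) 2 μ := by
  refine (memLp_two_iff_integrable_sq
    (hf.mul (Real.continuous_sqrt.comp_aestronglyMeasurable hw))).2 (hf2.congr ?_)
  filter_upwards [hw0] with x hx
  simp only [Pi.mul_apply]
  rw [mul_pow, Real.sq_sqrt hx]

theorem integrable_mul_mul_weight (hw : AEStronglyMeasurable w μ) (hw0 : 0 ≤ᵐ[μ] w)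
    (hf : AEStronglyMeasurable f μ) (hg : AEStronglyMeasurable g μ)
    (hf2 : Integrable (fun x => f x ^ 2 * w x) μ) (hg2 : Integrable (fun x => g x ^ 2 * w x) μ) :
    Integrable (fun x => f x * g x * w x) μ := by
  refine ((memLp_two_mul_sqrt hw hw0 hf hf2).integrable_mul
    (memLp_two_mul_sqrt hw hw0 hg hg2)).congr ?_
  filter_upwards [hw0] with x hx
  simp only [Pi.mul_apply]
  rw [mul_mul_mul_comm, Real.mul_self_sqrt hx]

theorem integral_abs_mul_mul_weight_le (hw : AEStronglyMeasurable w μ) (hw0 : 0 ≤ᵐ[μ] w)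
    (hf : AEStronglyMeasurable f μ) (hg : AEStronglyMeasurable g μ)
    (hf2 : Integrable (fun x => f x ^ 2 * w x) μ) (hg2 : Integrable (fun x => g x ^ 2 * w x) μ) :
    ∫ x, |f x * g x| * w x ∂μ ≤ √(∫ x, f x ^ 2 * w x ∂μ) * √(∫ x, g x ^ 2 * w x ∂μ) := by
  have h := integral_abs_mul_le_sqrt_mul_sqrt (memLp_two_mul_sqrt hw hw0 hf hf2)
    (memLp_two_mul_sqrt hw hw0 hg hg2)
  have hsq : ∀ {h : α → ℝ}, ∫ x, (h x * √(w x)) ^ 2 ∂μ = ∫ x, h x ^ 2 * w x ∂μ := by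
    refine fun {h} => integral_congr_ae ?_
    filter_upwards [hw0] with x hx
    rw [mul_pow, Real.sq_sqrt hx]
  rw [hsq, hsq] at h
  refine le_of_eq_of_le (integral_congr_ae ?_) h
  filter_upwards [hw0] with x hx
  rw [mul_mul_mul_comm, Real.mul_self_sqrt hx, abs_mul (f x * g x), abs_of_nonneg hx]

end WeightedCauchySchwarz

section Dilation

variable {p a : ℝ} {u v : ℝ → ℝ}

theorem eqOn_mul_div_rpow (f : ℝ → ℝ) (ha : 0 < a) :
    EqOn (fun x => f x * (x / a) ^ p) (fun x => a ^ (-p) * (f x * x ^ p)) (Ioi 0) := fun x hx => by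
  simp only
  rw [Real.div_rpow (le_of_lt hx) ha.le, Real.rpow_neg ha.le]
  ring

theorem integrableOn_Ioi_comp_mul_left_mul_rpow_iff (f : ℝ → ℝ) (ha : 0 < a) :
    IntegrableOn (fun x => f (a * x) * x ^ p) (Ioi 0) ↔
      IntegrableOn (fun x => f x * x ^ p) (Ioi 0) := by
  have h := integrableOn_Ioi_comp_mul_left_iff (fun y => f y * (y / a) ^ p) 0 ha
  simp only [mul_div_cancel_left₀ _ ha.ne', mul_zero] at h
  rw [h, integrableOn_congr_fun (eqOn_mul_div_rpow f ha) measurableSet_Ioi]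
  exact integrable_const_mul_iff (Real.rpow_pos_of_pos ha _).ne'.isUnit _

theorem integral_Ioi_comp_mul_left_mul_rpow (f : ℝ → ℝ) (ha : 0 < a) :
    ∫ x in Ioi 0, f (a * x) * x ^ p = a ^ (-(p + 1)) * ∫ x in Ioi 0, f x * x ^ p := by
  have h := integral_comp_mul_left_Ioi (fun y => f y * (y / a) ^ p) 0 ha
  simp only [mul_div_cancel_left₀ _ ha.ne', mul_zero, smul_eq_mul] at h
  rw [h, setIntegral_congr_fun measurableSet_Ioi (eqOn_mul_div_rpow f ha),
    integral_const_mul, ← mul_assoc, ← Real.rpow_neg_one, ← Real.rpow_add ha, neg_add, add_comm]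

theorem ae_restrict_Ioi_rpow_nonneg (p : ℝ) :
    0 ≤ᵐ[volume.restrict (Ioi (0 : ℝ))] fun x => x ^ p :=
  (ae_restrict_mem measurableSet_Ioi).mono fun _ hx => Real.rpow_nonneg (le_of_lt hx) p

theorem integrableOn_Ioi_mul_mul_rpow (hu : Measurable u) (hv : Measurable v)
    (hu2 : IntegrableOn (fun x => u x ^ 2 * x ^ p) (Ioi 0))
    (hv2 : IntegrableOn (fun x => v x ^ 2 * x ^ p) (Ioi 0)) :
    IntegrableOn (fun x => u x * v x * x ^ p) (Ioi 0) :=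
  integrable_mul_mul_weight (measurable_id.pow_const p).aestronglyMeasurable
    (ae_restrict_Ioi_rpow_nonneg p) hu.aestronglyMeasurable hv.aestronglyMeasurable hu2 hv2

theorem integral_Ioi_abs_mul_mul_rpow_le (hu : Measurable u) (hv : Measurable v)
    (hu2 : IntegrableOn (fun x => u x ^ 2 * x ^ p) (Ioi 0))
    (hv2 : IntegrableOn (fun x => v x ^ 2 * x ^ p) (Ioi 0)) :
    ∫ x in Ioi 0, |u x * v x| * x ^ p ≤
      √(∫ x in Ioi 0, u x ^ 2 * x ^ p) * √(∫ x in Ioi 0, v x ^ 2 * x ^ p) :=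
  integral_abs_mul_mul_weight_le (measurable_id.pow_const p).aestronglyMeasurable
    (ae_restrict_Ioi_rpow_nonneg p) hu.aestronglyMeasurable hv.aestronglyMeasurable hu2 hv2

theorem abs_integral_Ioi_mul_rpow_le (g : ℝ → ℝ) :
    |∫ x in Ioi 0, g x * x ^ p| ≤ ∫ x in Ioi 0, |g x| * x ^ p := by
  refine (abs_integral_le_integral_abs).trans_eq (integral_congr_ae ?_)
  filter_upwards [ae_restrict_Ioi_rpow_nonneg p] with x hx
  rw [abs_mul, abs_of_nonneg hx]

theorem sqrt_integral_Ioi_comp_mul_left_sq_mul_rpow (u : ℝ → ℝ) (ha : 0 < a) :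
    √(∫ x in Ioi 0, u (a * x) ^ 2 * x ^ p) =
      a ^ (-((p + 1) / 2)) * √(∫ x in Ioi 0, u x ^ 2 * x ^ p) := by
  rw [integral_Ioi_comp_mul_left_mul_rpow (fun y => u y ^ 2) ha, Real.sqrt_mul (Real.rpow_nonneg ha.le _), Real.sqrt_eq_rpow, ← Real.rpow_mul ha.le]
  ring_nf

theorem integral_Ioi_abs_comp_mul_left_mul_le (ha : 0 < a) (hu : Measurable u)
    (hv : Measurable v) (hu2 : IntegrableOn (fun x => u x ^ 2 * x ^ p) (Ioi 0))
    (hv2 : IntegrableOn (fun x => v x ^ 2 * x ^ p) (Ioi 0)) :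
    ∫ x in Ioi 0, |u (a * x) * v x| * x ^ p ≤
      a ^ (-((p + 1) / 2)) * √(∫ x in Ioi 0, u x ^ 2 * x ^ p) *
        √(∫ x in Ioi 0, v x ^ 2 * x ^ p) := by
  rw [← sqrt_integral_Ioi_comp_mul_left_sq_mul_rpow u ha]
  exact integral_Ioi_abs_mul_mul_rpow_le (hu.comp (measurable_const_mul a)) hv
    ((integrableOn_Ioi_comp_mul_left_mul_rpow_iff (fun y => u y ^ 2) ha).2 hu2) hv2

theorem integral_Ioi_dilation_form_eq (c : ℝ) (ha : 0 < a) (hu : Measurable u)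
    (hv : Measurable v) (hu2 : IntegrableOn (fun x => u x ^ 2 * x ^ p) (Ioi 0))
    (hv2 : IntegrableOn (fun x => v x ^ 2 * x ^ p) (Ioi 0)) :
    ∫ x in Ioi 0, (c * u (a * x) + u x) * v x * x ^ p =
      c * (∫ x in Ioi 0, u (a * x) * v x * x ^ p) + ∫ x in Ioi 0, u x * v x * x ^ p := by
  have hdil : IntegrableOn (fun x => u (a * x) * v x * x ^ p) (Ioi 0) :=
    integrableOn_Ioi_mul_mul_rpow (hu.comp (measurable_const_mul a)) hv
      ((integrableOn_Ioi_comp_mul_left_mul_rpow_iff (fun y => u y ^ 2) ha).2 hu2) hv2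
  rw [← integral_const_mul, ← integral_add (hdil.const_mul c)
    (integrableOn_Ioi_mul_mul_rpow hu hv hu2 hv2)]
  exact integral_congr_ae (Eventually.of_forall fun x => by simp only; ring)

theorem abs_integral_Ioi_dilation_form_le (c : ℝ) (ha : 0 < a) (hu : Measurable u)
    (hv : Measurable v) (hu2 : IntegrableOn (fun x => u x ^ 2 * x ^ p) (Ioi 0))
    (hv2 : IntegrableOn (fun x => v x ^ 2 * x ^ p) (Ioi 0)) :
    |∫ x in Ioi 0, (c * u (a * x) + u x) * v x * x ^ p| ≤
      (1 + |c| * a ^ (-((p + 1) / 2))) * √(∫ x in Ioi 0, u x ^ 2 * x ^ p) *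
        √(∫ x in Ioi 0, v x ^ 2 * x ^ p) := by
  have hdil := (abs_integral_Ioi_mul_rpow_le _).trans
    (integral_Ioi_abs_comp_mul_left_mul_le ha hu hv hu2 hv2)
  have hid := (abs_integral_Ioi_mul_rpow_le _).trans
    (integral_Ioi_abs_mul_mul_rpow_le hu hv hu2 hv2)
  rw [integral_Ioi_dilation_form_eq c ha hu hv hu2 hv2]
  calc _ ≤ |c| * |∫ x in Ioi 0, u (a * x) * v x * x ^ p| +
        |∫ x in Ioi 0, u x * v x * x ^ p| := by rw [← abs_mul]; exact abs_add_le _ _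
    _ ≤ _ := by nlinarith [abs_nonneg c]

theorem integral_Ioi_abs_comp_mul_left_mul_self_le (ha : 0 < a) (hu : Measurable u)
    (hu2 : IntegrableOn (fun x => u x ^ 2 * x ^ p) (Ioi 0)) :
    ∫ x in Ioi 0, |u (a * x) * u x| * x ^ p ≤
      a ^ (-((p + 1) / 2)) * ∫ x in Ioi 0, u x ^ 2 * x ^ p := by
  have hA : 0 ≤ ∫ x in Ioi 0, u x ^ 2 * x ^ p :=
    integral_nonneg_of_ae ((ae_restrict_Ioi_rpow_nonneg p).mono fun x hx =>
      mul_nonneg (sq_nonneg _) hx)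
  simpa only [mul_assoc, Real.mul_self_sqrt hA] using
    integral_Ioi_abs_comp_mul_left_mul_le ha hu hu hu2 hu2

theorem integral_Ioi_abs_const_mul_comp_mul_left_mul_self_le (c : ℝ) (ha : 0 < a)
    (hu : Measurable u) (hu2 : IntegrableOn (fun x => u x ^ 2 * x ^ p) (Ioi 0)) :
    ∫ x in Ioi 0, |c * u (a * x) * u x| * x ^ p ≤
      |c| * a ^ (-((p + 1) / 2)) * ∫ x in Ioi 0, u x ^ 2 * x ^ p := by
  calc ∫ x in Ioi 0, |c * u (a * x) * u x| * x ^ p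
      = |c| * ∫ x in Ioi 0, |u (a * x) * u x| * x ^ p := by
        rw [← integral_const_mul]
        exact integral_congr_ae (Eventually.of_forall fun x => by simp only [mul_assoc, abs_mul])
    _ ≤ _ := by
      rw [mul_assoc]
      exact mul_le_mul_of_nonneg_left (integral_Ioi_abs_comp_mul_left_mul_self_le ha hu hu2)
        (abs_nonneg c)

theorem le_integral_Ioi_dilation_form_self (c : ℝ) (ha : 0 < a) (hu : Measurable u)
    (hu2 : IntegrableOn (fun x => u x ^ 2 * x ^ p) (Ioi 0)) :
    (1 - |c| * a ^ (-((p + 1) / 2))) * ∫ x in Ioi 0, u x ^ 2 * x ^ p ≤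
      ∫ x in Ioi 0, (c * u (a * x) + u x) * u x * x ^ p := by
  have hcross := (abs_integral_Ioi_mul_rpow_le _).trans
    (integral_Ioi_abs_comp_mul_left_mul_self_le ha hu hu2)
  have hsq : ∫ x in Ioi 0, u x * u x * x ^ p = ∫ x in Ioi 0, u x ^ 2 * x ^ p :=
    integral_congr_ae (Eventually.of_forall fun x => by simp only [sq])
  rw [integral_Ioi_dilation_form_eq c ha hu hu hu2 hu2, hsq]
  nlinarith [neg_abs_le (c * ∫ x in Ioi 0, u (a * x) * u x * x ^ p), abs_mul c
    (∫ x in Ioi 0, u (a * x) * u x * x ^ p), mul_le_mul_of_nonneg_left hcross (abs_nonneg c)]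

end Dilation

theorem stmt15_general
    (k : ℕ) (p : ℝ)
    (u v : ℝ → ℝ) (hu : Measurable u) (hv : Measurable v)
    (hu2 : IntegrableOn (fun x => u x ^ 2 * x ^ p) (Ioi 0))
    (hv2 : IntegrableOn (fun x => v x ^ 2 * x ^ p) (Ioi 0)) :
    ((1 - 2 * (k : ℝ) * 2 ^ (-((p + 1) / 2))) *
        ∫ x in Ioi (0:ℝ), u x ^ 2 * x ^ p) ≤
      (∫ x in Ioi (0:ℝ), (-(2 * (k : ℝ)) * u (2 * x) + u x) * u x * x ^ p) ∧
    ((∫ x in Ioi (0:ℝ), |2 * (k : ℝ) * u (2 * x) * u x| * x ^ p) ≤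
      2 * (k : ℝ) * 2 ^ (-((p + 1) / 2)) *
        ∫ x in Ioi (0:ℝ), u x ^ 2 * x ^ p) ∧
    (|∫ x in Ioi (0:ℝ), (-(2 * (k : ℝ)) * u (2 * x) + u x) * v x * x ^ p| ≤
      (1 + 2 * (k : ℝ) * 2 ^ (-((p + 1) / 2))) *
        Real.sqrt (∫ x in Ioi (0:ℝ), u x ^ 2 * x ^ p) *
        Real.sqrt (∫ x in Ioi (0:ℝ), v x ^ 2 * x ^ p)) := by
  have hk : |2 * (k : ℝ)| = 2 * k := abs_of_nonneg (by positivity)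
  refine ⟨?_, ?_, ?_⟩
  · simpa only [abs_neg, hk] using le_integral_Ioi_dilation_form_self (-(2 * k)) two_pos hu hu2
  · simpa only [hk] using
      integral_Ioi_abs_const_mul_comp_mul_left_mul_self_le (2 * k) two_pos hu hu2
  · simpa only [abs_neg, hk] using
      abs_integral_Ioi_dilation_form_le (-(2 * k)) two_pos hu hv hu2 hv2

/-- boundedness and coercivity of the bilinear form
`a_p(u,v) = ∫ (−2k u(2x) + u(x)) v(x) x^p dx` on `L²(x^p dx)` for
`p > 2k−1`, with coercivity constant `α = 1 − 2k · 2^{−(p+1)/2}` and the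
Cauchy–Schwarz bound on the cross term. -/
theorem stmt15
    (k : ℕ) (hk : k = 1 ∨ k = 2) (p : ℝ) (hp : 2 * (k : ℝ) - 1 < p)
    (u v : ℝ → ℝ) (hu : Measurable u) (hv : Measurable v)
    (hu2 : IntegrableOn (fun x => u x ^ 2 * x ^ p) (Ioi 0))
    (hv2 : IntegrableOn (fun x => v x ^ 2 * x ^ p) (Ioi 0)) :
    ((1 - 2 * (k : ℝ) * 2 ^ (-((p + 1) / 2))) *
        ∫ x in Ioi (0:ℝ), u x ^ 2 * x ^ p) ≤
      (∫ x in Ioi (0:ℝ), (-(2 * (k : ℝ)) * u (2 * x) + u x) * u x * x ^ p) ∧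
    ((∫ x in Ioi (0:ℝ), |2 * (k : ℝ) * u (2 * x) * u x| * x ^ p) ≤
      2 * (k : ℝ) * 2 ^ (-((p + 1) / 2)) *
        ∫ x in Ioi (0:ℝ), u x ^ 2 * x ^ p) ∧
    (|∫ x in Ioi (0:ℝ), (-(2 * (k : ℝ)) * u (2 * x) + u x) * v x * x ^ p| ≤
      (1 + 2 * (k : ℝ) * 2 ^ (-((p + 1) / 2))) *
        Real.sqrt (∫ x in Ioi (0:ℝ), u x ^ 2 * x ^ p) *
        Real.sqrt (∫ x in Ioi (0:ℝ), v x ^ 2 * x ^ p)) :=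
  stmt15_general k p u v hu hv hu2 hv2
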